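/- arXiv:2104.13538 — 8 statements merged into one kernel-verified Lean document; each statement's English description precedes it below -/
import Mathlib

section
/- For every real C ≥ 2 and every real f with f ≥ C, one has Δ_C(f) > 0, where Δ_C(f) = f·log f + (f−C)·log(f−C) − (f−1)·log(f−1) − (f−C+1)·log(f−C+1). (This is the change in un-normalised population entropy when the count f of the most frequent segment is decreased by one and the count f−C of the least frequent segment is increased by one; its positivity is Lemma 1 of the paper, obtained by combining Lemma 2 and Lemma 3.) -/
/-- For a real parameter `C`, the change in un-normalised population entropy
`Δ_C(f) = f·log f + (f−C)·log(f−C) − (f−1)·log(f−1) − (f−C+1)·log(f−C+1)`. -/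
noncomputable def Delta (C f : ℝ) : ℝ :=
  f * Real.log f + (f - C) * Real.log (f - C)
    - (f - 1) * Real.log (f - 1) - (f - C + 1) * Real.log (f - C + 1)

noncomputable def entStep (x : ℝ) : ℝ := (x + 1) * Real.log (x + 1) - x * Real.log x

lemma entStep_strictMonoOn : StrictMonoOn entStep (Set.Ici (0 : ℝ)) := by
  have hc : ContinuousOn entStep (Set.Ici (0 : ℝ)) :=
    ((Real.continuous_mul_log.comp (continuous_id.add continuous_const)).sub
      Real.continuous_mul_log).continuousOn
  apply strictMonoOn_of_deriv_pos (convex_Ici 0) hc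
  intro x hx
  rw [interior_Ici] at hx
  have hxp : (0:ℝ) < x := hx
  have hx0 : x ≠ 0 := ne_of_gt hxp
  have hx1 : x + 1 ≠ 0 := ne_of_gt (by linarith)
  have h1 : HasDerivAt (fun y : ℝ => (y + 1) * Real.log (y + 1))
      ((Real.log (x + 1) + 1) * 1) x := by
    exact (Real.hasDerivAt_mul_log hx1).comp x ((hasDerivAt_id x).add_const 1)
  have h2 : HasDerivAt entStep ((Real.log (x + 1) + 1) * 1 - (Real.log x + 1)) x :=
    h1.sub (Real.hasDerivAt_mul_log hx0)
  rw [h2.deriv]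
  have : Real.log x < Real.log (x + 1) := Real.log_lt_log hxp (by linarith)
  linarith

/-- Lemma 1 of the paper: for every real `C ≥ 2` and every real `f ≥ C`,
one has `Δ_C(f) > 0`. -/
theorem delta_pos (C f : ℝ) (hC : 2 ≤ C) (hf : C ≤ f) : 0 < Delta C f := by
  have h1 : (0:ℝ) ≤ f - C := by linarith
  have h2 : f - C < f - 1 := by linarith
  have key : entStep (f - C) < entStep (f - 1) :=
    entStep_strictMonoOn h1 (by simp only [Set.mem_Ici]; linarith) h2
  have e1 : entStep (f - 1) = f * Real.log f - (f - 1) * Real.log (f - 1) := by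
    simp [entStep]
  have e2 : entStep (f - C) =
      (f - C + 1) * Real.log (f - C + 1) - (f - C) * Real.log (f - C) := by
    simp [entStep]
  unfold Delta
  rw [e1, e2] at key
  linarith
end

section
/- Let T > 0, C ≥ 2 and f ≥ C be real numbers. Then negMulLog((f−1)/T) + negMulLog((f−C+1)/T) > negMulLog(f/T) + negMulLog((f−C)/T). (Equivalently: replacing a segment of frequency f by frequency f−1 and a segment of frequency f−C by frequency f−C+1 strictly increases the sum of the entropy contributions h(s) = −(f(s)/T)·log(f(s)/T), where T = 2nμ is the total number of segment occurrences; this is Lemma 1 of the paper in its normalised form.) -/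
/-! Strict concavity of `negMulLog`: the points `(f - C)/T < (f - C + 1)/T ≤ (f - 1)/T < f/T`
cut off two end intervals of the same length `1/T`, and the secant slope of a strictly concave
function over the left one exceeds that over the right one. -/

section

variable {𝕜 : Type*} [Field 𝕜] [LinearOrder 𝕜] [IsStrictOrderedRing 𝕜] {s : Set 𝕜} {g : 𝕜 → 𝕜}

theorem StrictConcaveOn.slope_lt_slope_of_le (hg : StrictConcaveOn 𝕜 s g) {a b c d : 𝕜}
    (ha : a ∈ s) (hd : d ∈ s) (hab : a < b) (hbc : b ≤ c) (hcd : c < d) :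
    (g d - g c) / (d - c) < (g b - g a) / (b - a) := by
  rcases hbc.eq_or_lt with rfl | hbc
  · exact hg.slope_anti_adjacent ha hd hab hcd
  · have hc : c ∈ s := hg.1.ordConnected.out ha hd ⟨(hab.trans hbc).le, hcd.le⟩
    have hb : b ∈ s := hg.1.ordConnected.out ha hd ⟨hab.le, (hbc.trans hcd).le⟩
    calc (g d - g c) / (d - c) < (g c - g b) / (c - b) := hg.slope_anti_adjacent hb hd hbc hcd
      _ < (g b - g a) / (b - a) := hg.slope_anti_adjacent ha hc hab hbc

theorem StrictConcaveOn.add_lt_add_of_add_eq (hg : StrictConcaveOn 𝕜 s g) {a b c d : 𝕜}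
    (ha : a ∈ s) (hd : d ∈ s) (hab : a < b) (hbc : b ≤ c) (hcd : c < d) (hsum : a + d = b + c) :
    g a + g d < g b + g c := by
  have hlen : d - c = b - a := by linear_combination hsum
  have hslope := hg.slope_lt_slope_of_le ha hd hab hbc hcd
  rw [hlen, div_lt_div_iff_of_pos_right (sub_pos.mpr hab)] at hslope
  linarith

end

/-- Lemma 1 of the paper in normalised form: for `T > 0`, `C ≥ 2` and `f ≥ C`,
replacing a segment of frequency `f` by frequency `f − 1` and a segment of
frequency `f − C` by frequency `f − C + 1` strictly increases the sum of the
entropy contributions `h(s) = negMulLog (f(s)/T)`. -/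
theorem negMulLog_balance_gt (T C f : ℝ) (hT : 0 < T) (hC : 2 ≤ C) (hf : C ≤ f) :
    Real.negMulLog (f / T) + Real.negMulLog ((f - C) / T)
      < Real.negMulLog ((f - 1) / T) + Real.negMulLog ((f - C + 1) / T) := by
  have key := Real.strictConcaveOn_negMulLog.add_lt_add_of_add_eq
    (a := (f - C) / T) (b := (f - C + 1) / T) (c := (f - 1) / T) (d := f / T)
    (Set.mem_Ici.mpr (div_nonneg (by linarith) hT.le))
    (Set.mem_Ici.mpr (div_nonneg (by linarith) hT.le))
    (div_lt_div_of_pos_right (by linarith) hT)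
    (div_le_div_of_nonneg_right (by linarith) hT.le)
    (div_lt_div_of_pos_right (by linarith) hT)
    (by ring)
  linarith
end

section
/- Let u ≥ 1 and let F : Fin u → ℕ be a frequency vector with total N = ∑ i, F i. Suppose i₀ attains the minimum of F and j₀ attains the maximum of F (i.e., F i₀ ≤ F l ≤ F j₀ for all l), and that F j₀ ≥ F i₀ + 2. Let F' : Fin u → ℕ be defined by F' i₀ = F i₀ + 1, F' j₀ = F j₀ − 1, and F' l = F l for all other l. Then ∑ i, F' i = N and H(F') > H(F). (Lemma 1: decreasing f_max by one and increasing f_min by one strictly increases the population entropy whenever C = f_max − f_min ≥ 2.) -/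
/-!
Entropy is a sum of values of the strictly concave function `negMulLog`, and the move changes
only two summands, moving the frequencies `a + 2 ≤ b` to `a + 1 ≤ b - 1`. For a strictly
concave `f` and `a + d ≤ b - d`, the points `a + d = (1 - t) a + t b` and `b - d = t a + (1 - t) b`
with `t = d / (b - a) ∈ (0, 1)` give `f (a + d) + f (b - d) > f a + f b`.
-/

open Finset

theorem StrictConcaveOn.add_lt_add_of_shift_inward {𝕜 : Type*} [Field 𝕜] [LinearOrder 𝕜]
    [IsStrictOrderedRing 𝕜] {s : Set 𝕜} {f : 𝕜 → 𝕜} (hf : StrictConcaveOn 𝕜 s f)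
    {x y d : 𝕜} (hx : x ∈ s) (hy : y ∈ s) (hd : 0 < d) (h : x + d ≤ y - d) :
    f x + f y < f (x + d) + f (y - d) := by
  have hxy : 0 < y - x := by linarith
  set t := d / (y - x)
  have ht0 : 0 < t := div_pos hd hxy
  have ht1 : 0 < 1 - t := by rw [sub_pos, div_lt_one hxy]; linarith
  have hleft : (1 - t) • x + t • y = x + d := by
    simp only [smul_eq_mul, t]; field_simp; ring
  have hright : t • x + (1 - t) • y = y - d := by
    simp only [smul_eq_mul, t]; field_simp; ring
  have h₁ := hf.2 hx hy (sub_pos.1 hxy).ne ht1 ht0 (by ring)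
  have h₂ := hf.2 hx hy (sub_pos.1 hxy).ne ht0 ht1 (by ring)
  rw [hleft] at h₁
  rw [hright] at h₂
  simp only [smul_eq_mul] at h₁ h₂
  linarith

theorem Real.negMulLog_add_negMulLog_lt_of_transfer {a b N : ℕ} (hN : 0 < N) (hab : a + 2 ≤ b) :
    Real.negMulLog (a / N) + Real.negMulLog (b / N) <
      Real.negMulLog ((a + 1 : ℕ) / N) + Real.negMulLog ((b - 1 : ℕ) / N) := by
  have hN' : (0 : ℝ) < N := by exact_mod_cast hN
  have hab' : (a : ℝ) + 2 ≤ b := by exact_mod_cast hab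
  have key := Real.strictConcaveOn_negMulLog.add_lt_add_of_shift_inward
    (x := a / N) (y := b / N) (d := 1 / N)
    (Set.mem_Ici.2 (by positivity)) (Set.mem_Ici.2 (by positivity)) (by positivity)
    (by rw [← add_div, ← sub_div]; gcongr; linarith)
  rwa [← add_div, ← sub_div, ← Nat.cast_add_one, ← Nat.cast_pred (by omega)] at key

section PairUpdate

variable {ι M : Type*} [Fintype ι] [DecidableEq ι] [AddCommMonoid M] {i j : ι}

theorem Fintype.sum_eq_add_add_sum_compl_pair (hij : i ≠ j) (f : ι → M) :
    ∑ l, f l = f i + f j + ∑ l ∈ {i, j}ᶜ, f l := by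
  rw [← sum_pair hij, sum_add_sum_compl]

theorem Fintype.sum_compl_pair_congr {f f' : ι → M}
    (hrest : ∀ l, l ≠ i → l ≠ j → f' l = f l) :
    ∑ l ∈ {i, j}ᶜ, f' l = ∑ l ∈ {i, j}ᶜ, f l :=
  Finset.sum_congr rfl fun l hl => by
    simp only [mem_compl, mem_insert, mem_singleton, not_or] at hl
    exact hrest l hl.1 hl.2

theorem Fintype.sum_eq_sum_of_eq_off_pair {f f' : ι → M} (hij : i ≠ j)
    (hrest : ∀ l, l ≠ i → l ≠ j → f' l = f l) (hpair : f' i + f' j = f i + f j) :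
    ∑ l, f' l = ∑ l, f l := by
  rw [sum_eq_add_add_sum_compl_pair hij f, sum_eq_add_add_sum_compl_pair hij f',
    sum_compl_pair_congr hrest, hpair]

theorem Fintype.sum_lt_sum_of_lt_on_pair [PartialOrder M] [IsOrderedCancelAddMonoid M]
    {f f' : ι → M} (hij : i ≠ j)
    (hrest : ∀ l, l ≠ i → l ≠ j → f' l = f l) (hpair : f i + f j < f' i + f' j) :
    ∑ l, f l < ∑ l, f' l := by
  rw [sum_eq_add_add_sum_compl_pair hij f, sum_eq_add_add_sum_compl_pair hij f',
    sum_compl_pair_congr hrest]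
  gcongr

end PairUpdate

open Finset in
theorem entropy_increase_of_balance_general (u : ℕ) (F : Fin u → ℕ) (N : ℕ)
    (hN : N = ∑ i, F i) (i₀ j₀ : Fin u)
    (hC : F i₀ + 2 ≤ F j₀)
    (F' : Fin u → ℕ)
    (hFi : F' i₀ = F i₀ + 1) (hFj : F' j₀ = F j₀ - 1)
    (hFo : ∀ l, l ≠ i₀ → l ≠ j₀ → F' l = F l) :
    (∑ i, F' i = N) ∧
      ∑ i, Real.negMulLog ((F i : ℝ) / N) < ∑ i, Real.negMulLog ((F' i : ℝ) / N) := by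
  have hij : i₀ ≠ j₀ := by rintro rfl; omega
  have hNpos : 0 < N := by
    have := single_le_sum (fun i _ => Nat.zero_le (F i)) (mem_univ j₀)
    omega
  refine ⟨hN ▸ Fintype.sum_eq_sum_of_eq_off_pair hij hFo (by omega), ?_⟩
  refine Fintype.sum_lt_sum_of_lt_on_pair hij (fun l hl₁ hl₂ => by rw [hFo l hl₁ hl₂]) ?_
  rw [hFi, hFj]
  exact Real.negMulLog_add_negMulLog_lt_of_transfer hNpos hC

open Finset in
/-- Lemma 1: decreasing `f_max` by one and increasing `f_min` by one strictly
increases the population entropy whenever `C = f_max − f_min ≥ 2`. -/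
theorem entropy_increase_of_balance (u : ℕ) (hu : 1 ≤ u) (F : Fin u → ℕ) (N : ℕ)
    (hN : N = ∑ i, F i) (i₀ j₀ : Fin u)
    (hmin : ∀ l, F i₀ ≤ F l) (hmax : ∀ l, F l ≤ F j₀)
    (hC : F i₀ + 2 ≤ F j₀)
    (F' : Fin u → ℕ)
    (hFi : F' i₀ = F i₀ + 1) (hFj : F' j₀ = F j₀ - 1)
    (hFo : ∀ l, l ≠ i₀ → l ≠ j₀ → F' l = F l) :
    (∑ i, F' i = N) ∧
      ∑ i, Real.negMulLog ((F i : ℝ) / N) < ∑ i, Real.negMulLog ((F' i : ℝ) / N) :=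
  entropy_increase_of_balance_general u F N hN i₀ j₀ hC F' hFi hFj hFo
end

section
/- For every real C ≥ 2, the function Δ_C is strictly decreasing on the interval [C, ∞): for all reals f₁, f₂ with C ≤ f₁ < f₂, one has Δ_C(f₂) < Δ_C(f₁). (Lemma 2 of the paper: the entropy difference H(P₂) − H(P₁) is monotonically decreasing in f = f_max when C ≥ 2.) -/
open Real Set

theorem HasDerivAt.mul_log {g : ℝ → ℝ} {g' x : ℝ} (hg : HasDerivAt g g' x) (hx : g x ≠ 0) :
    HasDerivAt (fun y ↦ g y * Real.log (g y)) ((Real.log (g x) + 1) * g') x :=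
  (hasDerivAt_mul_log hx).comp x hg

theorem continuous_delta (C : ℝ) : Continuous (Delta C) := by
  unfold Delta
  fun_prop

theorem hasDerivAt_delta {C x : ℝ} (h₀ : x ≠ 0) (hC : x - C ≠ 0) (h₁ : x - 1 ≠ 0)
    (hC₁ : x - C + 1 ≠ 0) :
    HasDerivAt (Delta C) (log x + log (x - C) - log (x - 1) - log (x - C + 1)) x := by
  have hid := hasDerivAt_id' x
  have hΔ := (((hid.mul_log h₀).add ((hid.sub_const C).mul_log hC)).sub
    ((hid.sub_const 1).mul_log h₁)).sub (((hid.sub_const C).add_const 1).mul_log hC₁)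
  exact hΔ.congr_deriv (by ring)

theorem log_add_log_sub_lt {C x : ℝ} (hC : 1 < C) (hx : C < x) :
    log x + log (x - C) < log (x - 1) + log (x - C + 1) := by
  rw [← log_mul (by linarith) (by linarith), ← log_mul (by linarith) (by linarith)]
  exact log_lt_log (mul_pos (by linarith) (by linarith)) (by nlinarith)

theorem delta_strictAntiOn {C : ℝ} (hC : 1 < C) : StrictAntiOn (Delta C) (Ici C) := by
  refine strictAntiOn_of_hasDerivWithinAt_neg (convex_Ici C) (continuous_delta C).continuousOn
    (f' := fun x ↦ log x + log (x - C) - log (x - 1) - log (x - C + 1))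
    ?_ ?_ <;> simp only [interior_Ici, mem_Ioi] <;> intro x hx
  · exact HasDerivAt.hasDerivWithinAt <|
      hasDerivAt_delta (by linarith) (by linarith) (by linarith) (by linarith)
  · linarith [log_add_log_sub_lt hC hx]

/-- Lemma 2 of the paper: for every `C ≥ 2`, `Δ_C` is strictly decreasing on `[C, ∞)`. -/
theorem delta_strictAnti (C : ℝ) (hC : 2 ≤ C) :
    ∀ f₁ f₂ : ℝ, C ≤ f₁ → f₁ < f₂ → Delta C f₂ < Delta C f₁ := fun f₁ f₂ h₁ h₁₂ ↦
  delta_strictAntiOn (by linarith) h₁ (h₁.trans h₁₂.le : C ≤ f₂) h₁₂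
end

section
/- Let u ≥ 1 and N ≥ 1 be natural numbers, and let F : Fin u → ℕ satisfy ∑ i, F i = N. Then H(F) ≥ H(G) holds for every G : Fin u → ℕ with ∑ i, G i = N if and only if F is balanced, i.e., F i ≤ F j + 1 for all i, j. (Theorem 1 of the paper: a frequency vector attains the maximum entropy among all frequency vectors with the same total if and only if the difference C between its largest and smallest entries is 0 or 1.) -/
open Finset Real

private lemma negMulLog_move {x y δ : ℝ} (hx : 0 ≤ x) (hδ : 0 < δ)
    (hxy : x + 2*δ ≤ y) :
    Real.negMulLog x + Real.negMulLog y <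
      Real.negMulLog (x + δ) + Real.negMulLog (y - δ) := by
  have hy : (0:ℝ) ≤ y := by linarith
  have hyx : 0 < y - x := by linarith
  set t : ℝ := δ / (y - x) with ht
  have ht0 : 0 < t := div_pos hδ hyx
  have ht1 : t < 1 := by rw [ht, div_lt_one hyx]; linarith
  have hne : x ≠ y := by intro h; linarith
  have h1 : (1 - t) * x + t * y = x + δ := by
    have : t * (y - x) = δ := by rw [ht]; field_simp
    nlinarith [this]
  have h2 : t * x + (1 - t) * y = y - δ := by
    have : t * (y - x) = δ := by rw [ht]; field_simp
    nlinarith [this]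
  have hA := Real.strictConcaveOn_negMulLog.2 (Set.mem_Ici.2 hx) (Set.mem_Ici.2 hy)
      hne (by linarith : (0:ℝ) < 1 - t) ht0 (by ring)
  have hB := Real.strictConcaveOn_negMulLog.2 (Set.mem_Ici.2 hx) (Set.mem_Ici.2 hy)
      hne ht0 (by linarith : (0:ℝ) < 1 - t) (by ring)
  simp only [smul_eq_mul] at hA hB
  rw [h1] at hA
  rw [h2] at hB
  linarith

private lemma g_move {N a b : ℕ} (hN : 1 ≤ N) (hab : a + 2 ≤ b) :
    Real.negMulLog ((a:ℝ)/N) + Real.negMulLog ((b:ℝ)/N) <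
      Real.negMulLog (((a+1:ℕ):ℝ)/N) + Real.negMulLog (((b-1:ℕ):ℝ)/N) := by
  have hN' : (0:ℝ) < N := by exact_mod_cast hN
  have h1 : (((a+1:ℕ):ℝ))/N = (a:ℝ)/N + 1/N := by push_cast; ring
  have h2 : (((b-1:ℕ):ℝ))/N = (b:ℝ)/N - 1/N := by
    have : ((b-1:ℕ):ℝ) = (b:ℝ) - 1 := by
      have : 1 ≤ b := by omega
      push_cast [this]; ring
    rw [this]; ring
  rw [h1, h2]
  apply negMulLog_move (by positivity) (by positivity)
  have hc : (a:ℝ) + 2 ≤ (b:ℝ) := by exact_mod_cast hab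
  rw [show (a:ℝ)/N + 2*(1/N) = ((a:ℝ)+2)/N by ring]
  gcongr

private lemma sum_update_two {M : Type*} [AddCommMonoid M] {u : ℕ} (f : Fin u → M)
    {i j : Fin u} (hij : i ≠ j) (a b : M) :
    ∑ k, Function.update (Function.update f i a) j b k
      = b + (a + ∑ k ∈ (Finset.univ \ {j}) \ {i}, f k) := by
  rw [Finset.sum_update_of_mem (Finset.mem_univ j)]
  rw [Finset.sum_update_of_mem (by simp [hij] : i ∈ Finset.univ \ {j})]

private lemma sum_eq_two {M : Type*} [AddCommMonoid M] {u : ℕ} (f : Fin u → M)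
    {i j : Fin u} (hij : i ≠ j) :
    ∑ k, f k = f j + (f i + ∑ k ∈ (Finset.univ \ {j}) \ {i}, f k) := by
  have := sum_update_two f hij (f i) (f j)
  simpa [Function.update_eq_self] using this

/-- Un-balancing move: if `F i ≥ F j + 2`, moving one unit from `i` to `j`
keeps the total, strictly decreases the sum of squares, and strictly increases
entropy. -/
private lemma exists_better {u N : ℕ} (hN : 1 ≤ N) (F : Fin u → ℕ)
    (hFs : ∑ k, F k = N) {i j : Fin u} (h : F j + 2 ≤ F i) :
    ∃ G : Fin u → ℕ, (∑ k, G k = N) ∧ (∑ k, (G k)^2 < ∑ k, (F k)^2) ∧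
      ∑ k, Real.negMulLog ((F k : ℝ) / N) < ∑ k, Real.negMulLog ((G k : ℝ) / N) := by
  have hij : j ≠ i := by intro e; rw [e] at h; omega
  set G : Fin u → ℕ := Function.update (Function.update F j (F j + 1)) i (F i - 1) with hG
  have hsq : (fun k => (G k)^2)
      = Function.update (Function.update (fun k => (F k)^2) j ((F j + 1)^2)) i ((F i - 1)^2) := by
    funext k
    simp only [hG, Function.update_apply]
    split_ifs <;> rfl
  have hent : (fun k => Real.negMulLog ((G k : ℝ) / N))
      = Function.update (Function.update (fun k => Real.negMulLog ((F k : ℝ) / N)) j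
          (Real.negMulLog (((F j + 1 : ℕ) : ℝ) / N))) i
          (Real.negMulLog (((F i - 1 : ℕ) : ℝ) / N)) := by
    funext k
    simp only [hG, Function.update_apply]
    split_ifs <;> rfl
  refine ⟨G, ?_, ?_, ?_⟩
  · have h1 := sum_update_two F hij (F j + 1) (F i - 1)
    have h2 := sum_eq_two F hij
    rw [hG, h1]; rw [h2] at hFs; omega
  · have h1 := sum_update_two (fun k => (F k)^2) hij ((F j + 1)^2) ((F i - 1)^2)
    have h2 := sum_eq_two (fun k => (F k)^2) hij
    rw [hsq, h1, h2]
    obtain ⟨c, hc⟩ : ∃ c, F i = c + 1 := ⟨F i - 1, by omega⟩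
    have hc' : F i - 1 = c := by omega
    have hcj : F j + 1 ≤ c := by omega
    simp only [hc] at *
    have e1 : (c+1)^2 = c^2 + 2*c + 1 := by ring
    have e2 : (F j + 1)^2 = (F j)^2 + 2*(F j) + 1 := by ring
    have e3 : (F j + 1)^2 ≤ c^2 := Nat.pow_le_pow_left hcj 2
    simp only [Nat.add_sub_cancel]
    omega
  · have h1 := sum_update_two (fun k => Real.negMulLog ((F k : ℝ) / N)) hij
        (Real.negMulLog (((F j + 1 : ℕ) : ℝ) / N)) (Real.negMulLog (((F i - 1 : ℕ) : ℝ) / N))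
    have h2 := sum_eq_two (fun k => Real.negMulLog ((F k : ℝ) / N)) hij
    rw [hent, h1, h2]
    have := g_move (a := F j) (b := F i) hN h
    linarith

/-- All balanced vectors with total `N` have the same entropy (explicit formula). -/
private lemma balanced_entropy {u N : ℕ} (hu : 1 ≤ u) (F : Fin u → ℕ)
    (hFs : ∑ k, F k = N) (hb : ∀ i j, F i ≤ F j + 1) :
    ∑ k, Real.negMulLog ((F k : ℝ) / N)
      = (N % u) • Real.negMulLog (((N / u + 1 : ℕ) : ℝ) / N)
        + (u - N % u) • Real.negMulLog (((N / u : ℕ) : ℝ) / N) := by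
  have hu0 : 0 < u := hu
  have hne : (Finset.univ : Finset (Fin u)).Nonempty := by
    have : Nonempty (Fin u) := Fin.pos_iff_nonempty.mp hu0
    exact Finset.univ_nonempty
  obtain ⟨i₀, -, hmin⟩ := Finset.exists_min_image Finset.univ F hne
  set m := F i₀ with hm
  have hup : ∀ i, F i = m ∨ F i = m + 1 := by
    intro i
    have h1 : m ≤ F i := hmin i (Finset.mem_univ i)
    have h2 : F i ≤ m + 1 := hb i i₀
    omega
  set s := (Finset.univ.filter (fun i => F i = m + 1)).card with hs
  have hcard : (Finset.univ.filter (fun i => ¬ F i = m + 1)).card = u - s := by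
    have := Finset.card_filter_add_card_filter_not
      (s := (Finset.univ : Finset (Fin u))) (p := fun i => F i = m + 1)
    simp only [Finset.card_univ, Fintype.card_fin] at this
    omega
  have hsum : N = u * m + s := by
    rw [← hFs, ← Finset.sum_filter_add_sum_filter_not Finset.univ (fun i => F i = m + 1)]
    have e1 : ∑ i ∈ Finset.univ.filter (fun i => F i = m + 1), F i = s * (m + 1) := by
      rw [hs, Finset.sum_congr rfl (fun i hi => (Finset.mem_filter.mp hi).2), Finset.sum_const,
        smul_eq_mul]
    have e2 : ∑ i ∈ Finset.univ.filter (fun i => ¬ F i = m + 1), F i = (u - s) * m := by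
      rw [Finset.sum_congr rfl (fun i hi => ?_), Finset.sum_const, hcard, smul_eq_mul]
      have := hup i
      have := (Finset.mem_filter.mp hi).2
      omega
    rw [e1, e2]
    have hsu : s ≤ u := by
      rw [hs]; simpa using Finset.card_filter_le Finset.univ (fun i => F i = m + 1)
    have : u - s + s = u := by omega
    nlinarith [this]
  have hslt : s < u := by
    have : i₀ ∉ Finset.univ.filter (fun i => F i = m + 1) := by
      simp [hm]
    calc s < (Finset.univ : Finset (Fin u)).card := by
            apply Finset.card_lt_card
            rw [Finset.ssubset_iff_of_subset (Finset.filter_subset _ _)]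
            exact ⟨i₀, Finset.mem_univ _, this⟩
      _ = u := by simp
  have hdm : N / u = m ∧ N % u = s :=
    (Nat.div_mod_unique hu0).mpr ⟨by omega, hslt⟩
  rw [← Finset.sum_filter_add_sum_filter_not Finset.univ (fun i => F i = m + 1)
      (fun k => Real.negMulLog ((F k : ℝ) / N))]
  have e1 : ∑ i ∈ Finset.univ.filter (fun i => F i = m + 1),
      Real.negMulLog ((F i : ℝ) / N) = s • Real.negMulLog (((m + 1 : ℕ) : ℝ) / N) := by
    rw [hs, Finset.sum_congr rfl (fun i hi => ?_), Finset.sum_const]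
    rw [(Finset.mem_filter.mp hi).2]
  have e2 : ∑ i ∈ Finset.univ.filter (fun i => ¬ F i = m + 1),
      Real.negMulLog ((F i : ℝ) / N) = (u - s) • Real.negMulLog (((m : ℕ) : ℝ) / N) := by
    rw [Finset.sum_congr rfl (fun i hi => ?_), Finset.sum_const, hcard]
    have h3 := hup i
    have h4 := (Finset.mem_filter.mp hi).2
    have : F i = m := by omega
    rw [this]
  rw [e1, e2, hdm.1, hdm.2]

private lemma le_of_balanced {u N : ℕ} (hu : 1 ≤ u) (hN : 1 ≤ N) (F : Fin u → ℕ)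
    (hF : ∑ i, F i = N) (hb : ∀ i j, F i ≤ F j + 1) :
    ∀ n (G : Fin u → ℕ), (∑ i, G i = N) → (∑ i, (G i)^2 ≤ n) →
      ∑ i, Real.negMulLog ((G i : ℝ) / N) ≤ ∑ i, Real.negMulLog ((F i : ℝ) / N) := by
  intro n
  induction n with
  | zero =>
    intro G hG hsq
    exfalso
    have : ∀ i, G i = 0 := by
      intro i
      have h1 : (G i)^2 ≤ 0 := le_trans (Finset.single_le_sum
        (f := fun i => (G i)^2) (fun i _ => Nat.zero_le _) (Finset.mem_univ i)) hsq
      nlinarith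
    rw [Finset.sum_congr rfl (fun i _ => this i), Finset.sum_const] at hG
    simp at hG
    omega
  | succ n ih =>
    intro G hG hsq
    by_cases hbG : ∀ i j, G i ≤ G j + 1
    · rw [balanced_entropy hu F hF hb, balanced_entropy hu G hG hbG]
    · push_neg at hbG
      obtain ⟨i, j, hij⟩ := hbG
      have h2 : G j + 2 ≤ G i := by omega
      obtain ⟨G', hG's, hG'sq, hG'ent⟩ := exists_better hN G hG h2
      exact le_trans (le_of_lt hG'ent) (ih G' hG's (by omega))

/-- Theorem 1 of the paper: a frequency vector `F : Fin u → ℕ` with total `N`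
attains the maximum entropy among all frequency vectors with the same total
if and only if its values differ by at most one. -/
theorem entropy_max_iff_balanced (u N : ℕ) (hu : 1 ≤ u) (hN : 1 ≤ N)
    (F : Fin u → ℕ) (hF : ∑ i, F i = N) :
    (∀ G : Fin u → ℕ, (∑ i, G i = N) →
        ∑ i, Real.negMulLog ((G i : ℝ) / N) ≤ ∑ i, Real.negMulLog ((F i : ℝ) / N))
      ↔ (∀ i j, F i ≤ F j + 1) := by
  constructor
  · intro hmax i j
    by_contra hc
    have h2 : F j + 2 ≤ F i := by omega
    obtain ⟨G, hGs, -, hGent⟩ := exists_better hN F hF h2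
    exact absurd (hmax G hGs) (not_le.mpr hGent)
  · intro hb G hG
    exact le_of_balanced hu hN F hF hb (∑ i, (G i)^2) G hG le_rfl
end

section
/- Let u ≥ 1 and N ≥ 1 be natural numbers, let F : Fin u → ℕ satisfy ∑ i, F i = N, and suppose F is balanced (F i ≤ F j + 1 for all i, j). Let q = ⌊N/u⌋ (natural-number division). Then H(F) = (N − q·u)·negMulLog((q+1)/N) + ((q+1)·u − N)·negMulLog(q/N). (This is the closed-form expression for the maximum entropy H_max in Equation (5) of the paper, with f*_min = ⌊2nμ/u⌋.) -/
/-- Equation (5) of the paper: the closed-form expression for the entropy of a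
balanced frequency vector with total `N` over `u` segment types, where
`q = ⌊N/u⌋`. -/
theorem entropy_balanced_eq (u N : ℕ) (hu : 1 ≤ u) (hN : 1 ≤ N)
    (F : Fin u → ℕ) (hF : ∑ i, F i = N) (hbal : ∀ i j, F i ≤ F j + 1) :
    ∑ i, Real.negMulLog ((F i : ℝ) / N)
      = ((N : ℝ) - (N / u : ℕ) * u) * Real.negMulLog (((N / u : ℕ) + 1 : ℝ) / N)
        + (((N / u : ℕ) + 1 : ℝ) * u - N) * Real.negMulLog (((N / u : ℕ) : ℝ) / N) := by
  set q := N / u with hq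
  have : NeZero u := ⟨by omega⟩
  obtain ⟨i₀, -, hmin⟩ := Finset.exists_min_image Finset.univ F Finset.univ_nonempty
  set m := F i₀ with hm
  have hle : ∀ i, F i ≤ m + 1 := fun i => hbal i i₀
  have hge : ∀ i, m ≤ F i := fun i => hmin i (Finset.mem_univ i)
  have hFq : ∀ i, F i = q ∨ F i = q + 1 := by
    by_cases hcase : N = u * (m + 1)
    · have hall : ∀ i ∈ Finset.univ, F i = m + 1 := by
        rw [← Finset.sum_eq_sum_iff_of_le (fun i _ => hle i)]
        rw [hF, Finset.sum_const, Finset.card_univ, Fintype.card_fin, smul_eq_mul, hcase]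
      have hqm : q = m + 1 := by rw [hq, hcase, Nat.mul_div_cancel_left _ (by omega)]
      intro i; left; rw [hall i (Finset.mem_univ i), hqm]
    · have h1 : u * m ≤ N := by
        calc u * m = ∑ _i : Fin u, m := by simp [mul_comm]
        _ ≤ ∑ i, F i := Finset.sum_le_sum (fun i _ => hge i)
        _ = N := hF
      have h2 : N ≤ u * (m + 1) := by
        calc N = ∑ i, F i := hF.symm
        _ ≤ ∑ _i : Fin u, (m + 1) := Finset.sum_le_sum (fun i _ => hle i)
        _ = u * (m + 1) := by simp [mul_comm]
      have h2' : N < u * (m + 1) := lt_of_le_of_ne h2 hcase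
      have hqm : q = m := by
        rw [hq]
        exact Nat.div_eq_of_lt_le (by rw [mul_comm] at h1; exact h1)
          (by rw [mul_comm] at h2'; exact h2')
      intro i
      have h3 := hle i; have h4 := hge i
      omega
  set A := Finset.univ.filter (fun i => F i = q + 1) with hA
  have hmemA : ∀ i ∈ A, F i = q + 1 := fun i hi => (Finset.mem_filter.mp hi).2
  have hmemAc : ∀ i ∈ Aᶜ, F i = q := by
    intro i hi
    have : ¬ (F i = q + 1) := by
      simpa [hA] using (Finset.mem_compl.mp hi)
    rcases hFq i with h | h
    · exact h
    · exact absurd h this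
  have hcardsum : A.card + Aᶜ.card = u := by
    rw [Finset.card_add_card_compl, Fintype.card_fin]
  have hsum : A.card * (q + 1) + Aᶜ.card * q = N := by
    rw [← hF, ← Finset.sum_add_sum_compl A F]
    rw [Finset.sum_congr rfl hmemA, Finset.sum_congr rfl hmemAc,
      Finset.sum_const, Finset.sum_const, smul_eq_mul, smul_eq_mul]
  have hsum' : A.card + q * u = N := by
    have h := hsum
    rw [show A.card * (q + 1) + Aᶜ.card * q = A.card + (A.card + Aᶜ.card) * q from by
      ring, hcardsum, mul_comm] at h
    exact h
  have hqu : q * u ≤ N := by omega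
  have hexp : (q + 1) * u = u + q * u := by ring
  have hNqu : N ≤ (q + 1) * u := by omega
  have hcA : A.card = N - q * u := by omega
  have hcAc : Aᶜ.card = (q + 1) * u - N := by omega
  have hLHS : ∑ i, Real.negMulLog ((F i : ℝ) / N)
      = (A.card : ℝ) * Real.negMulLog (((q : ℝ) + 1) / N)
        + (Aᶜ.card : ℝ) * Real.negMulLog ((q : ℝ) / N) := by
    have e1 : ∀ i ∈ A, Real.negMulLog ((F i : ℝ) / N)
        = Real.negMulLog (((q : ℝ) + 1) / N) := by
      intro i hi
      rw [hmemA i hi]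
      norm_cast
    have e2 : ∀ i ∈ Aᶜ, Real.negMulLog ((F i : ℝ) / N)
        = Real.negMulLog ((q : ℝ) / N) := by
      intro i hi
      rw [hmemAc i hi]
    rw [← Finset.sum_add_sum_compl A, Finset.sum_congr rfl e1, Finset.sum_congr rfl e2,
      Finset.sum_const, Finset.sum_const, nsmul_eq_mul, nsmul_eq_mul]
  rw [hLHS, hcA, hcAc]
  have e1 : ((N - q * u : ℕ) : ℝ) = (N : ℝ) - (q : ℝ) * u := by
    push_cast [hqu]; ring
  have e2 : (((q + 1) * u - N : ℕ) : ℝ) = ((q : ℝ) + 1) * u - N := by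
    push_cast [hNqu]; ring
  rw [e1, e2]
end

section
/- Let u ≥ 1 and N ≥ 1 be natural numbers and let q = ⌊N/u⌋ (natural-number division). Then the value (N − q·u)·negMulLog((q+1)/N) + ((q+1)·u − N)·negMulLog(q/N) is the greatest element of the set { H(F) : F : Fin u → ℕ, ∑ i, F i = N }; that is, it is attained by some such F and is an upper bound for H(G) over all G : Fin u → ℕ with ∑ i, G i = N. (Combination of Theorem 1 and Equation (5): the formula H_max gives the maximum achievable entropy of a frequency vector with total N over u segment types.) -/
/-!
Since `t ↦ negMulLog (t / N)` is concave, at every natural number `m` it lies below its secant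
line through `q` and `q + 1`, with equality at `m ∈ {q, q + 1}`. Summed over the entries of a
vector with total `N`, the secant line gives a value depending only on `N`, namely the claimed
one; a vector whose entries all lie in `{q, q + 1}` attains it.
-/

open Real Finset

theorem ConcaveOn.mul_le_secant {s : Set ℝ} {f : ℝ → ℝ} (hf : ConcaveOn ℝ s f)
    {a b x : ℝ} (ha : a ∈ s) (hb : b ∈ s) (hx : x ∈ s) (hab : a < b) (hxab : x ∉ Set.Ioo a b) :
    (b - a) * f x ≤ (b - x) * f a + (x - a) * f b := by
  rcases lt_trichotomy x a with hxa | rfl | hax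
  · have h := hf.neg.secant_mono_aux1 hx hb hxa hab
    simp only [Pi.neg_apply] at h
    linear_combination h
  · linarith
  · rcases (le_of_not_gt fun hxb => hxab ⟨hax, hxb⟩).eq_or_lt with rfl | hbx
    · linarith
    · have h := hf.neg.secant_mono_aux1 ha hx hab hbx
      simp only [Pi.neg_apply] at h
      linear_combination h

theorem ConcaveOn.natCast_le_secant {f : ℝ → ℝ} (hf : ConcaveOn ℝ (Set.Ici 0) f) (k m : ℕ) :
    f m ≤ (k + 1 - m) * f k + (m - k) * f (k + 1) := by
  have hm : (m : ℝ) ∉ Set.Ioo (k : ℝ) (k + 1) := fun ⟨h₁, h₂⟩ => by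
    norm_cast at h₁ h₂; omega
  simpa using hf.mul_le_secant (by simp) (by simp; positivity) (by simp) (by simp) hm

theorem apply_natCast_eq_secant {f : ℝ → ℝ} (k m : ℕ) (hm : m = k ∨ m = k + 1) :
    f m = (k + 1 - m) * f k + (m - k) * f (k + 1) := by
  rcases hm with rfl | rfl <;> push_cast <;> ring

theorem sum_secant_eq {ι : Type*} [Fintype ι] (G : ι → ℕ) (k : ℕ) (A B : ℝ) :
    ∑ i, ((k + 1 - G i) * A + (G i - k) * B : ℝ)
      = ((∑ i, G i : ℕ) - k * Fintype.card ι) * B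
        + ((k + 1) * Fintype.card ι - (∑ i, G i : ℕ)) * A := by
  push_cast
  simp only [sub_mul, add_mul, sum_add_distrib, sum_sub_distrib, sum_const, card_univ,
    ← sum_mul, nsmul_eq_mul]
  ring

theorem exists_sum_eq_and_forall_eq_div_or_eq_div_add_one {u : ℕ} (hu : 0 < u) (N : ℕ) :
    ∃ F : Fin u → ℕ, ∑ i, F i = N ∧ ∀ i, F i = N / u ∨ F i = N / u + 1 := by
  refine ⟨fun i => N / u + if (i : ℕ) < N % u then 1 else 0, ?_,
    fun i => by dsimp only; split_ifs <;> simp⟩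
  rw [sum_add_distrib, sum_boole, Fin.card_filter_val_lt, min_eq_right (Nat.mod_lt N hu).le]
  simp [Nat.div_add_mod]

theorem concaveOn_negMulLog_div (N : ℝ) (hN : 0 ≤ N) :
    ConcaveOn ℝ (Set.Ici 0) fun t => negMulLog (t / N) := by
  have := concaveOn_negMulLog.comp_linearMap (N⁻¹ • LinearMap.id)
  refine this.subset (fun t ht => ?_) (convex_Ici 0) |>.congr fun t _ => ?_
  · simp only [Set.mem_preimage, LinearMap.smul_apply, LinearMap.id_apply, smul_eq_mul,
      Set.mem_Ici] at ht ⊢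
    positivity
  · simp [div_eq_inv_mul]

theorem entropy_isGreatest_general (u N : ℕ) (hu : 1 ≤ u) :
    IsGreatest
      {h : ℝ | ∃ F : Fin u → ℕ, (∑ i, F i = N) ∧
        h = ∑ i, Real.negMulLog ((F i : ℝ) / N)}
      (((N : ℝ) - (N / u : ℕ) * u) * Real.negMulLog (((N / u : ℕ) + 1 : ℝ) / N)
        + (((N / u : ℕ) + 1 : ℝ) * u - N) * Real.negMulLog (((N / u : ℕ) : ℝ) / N)) := by
  obtain ⟨F, hF, hFdiv⟩ := exists_sum_eq_and_forall_eq_div_or_eq_div_add_one hu N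
  set q : ℕ := N / u
  set f : ℝ → ℝ := fun t => negMulLog (t / N)
  have secant_sum {G : Fin u → ℕ} (hG : ∑ i, G i = N) :
      ∑ i, ((q + 1 - G i) * f q + (G i - q) * f (q + 1) : ℝ)
        = ((N : ℝ) - q * u) * f (q + 1) + ((q + 1 : ℝ) * u - N) * f q := by
    rw [sum_secant_eq, hG, Fintype.card_fin]
  constructor
  · refine ⟨F, hF, ?_⟩
    rw [← secant_sum hF]
    exact (sum_congr rfl fun i _ => apply_natCast_eq_secant q (F i) (hFdiv i)).symm
  · rintro _ ⟨G, hG, rfl⟩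
    rw [← secant_sum hG]
    exact sum_le_sum fun i _ =>
      (concaveOn_negMulLog_div N (Nat.cast_nonneg N)).natCast_le_secant q (G i)

/-- Combination of Theorem 1 and Equation (5): the formula `H_max` gives the
maximum achievable entropy of a frequency vector with total `N` over `u`
segment types. -/
theorem entropy_isGreatest (u N : ℕ) (hu : 1 ≤ u) (hN : 1 ≤ N) :
    IsGreatest
      {h : ℝ | ∃ F : Fin u → ℕ, (∑ i, F i = N) ∧
        h = ∑ i, Real.negMulLog ((F i : ℝ) / N)}
      (((N : ℝ) - (N / u : ℕ) * u) * Real.negMulLog (((N / u : ℕ) + 1 : ℝ) / N)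
        + (((N / u : ℕ) + 1 : ℝ) * u - N) * Real.negMulLog (((N / u : ℕ) : ℝ) / N)) :=
  entropy_isGreatest_general u N hu
end

section
/- Let n ≥ 1, μ ≥ 1 and u ≥ 1 be natural numbers and let F : Fin u → ℕ satisfy ∑ i, F i = 2·n·μ and F i ≤ μ for every i. Then H(F) ≥ log(2·n), with equality if and only if every value F i is either 0 or μ. (This is the paper's minimum-entropy claim, Equation (6): since no segment occurs more than once per tour, each segment frequency is at most μ, the entropy of any population of μ tours on n cities is at least ln(2n), and the worst case H_min = ln(2n) is attained exactly when the population consists of μ copies of a single tour, i.e., 2n segments each occurring μ times.) -/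
open Real Finset

/-- Equation (6) of the paper: for a frequency vector `F` with total `2nμ`
whose values are bounded above by `μ`, the entropy is at least `log (2n)`,
with equality iff every value of `F` is `0` or `μ` (the population consists
of `μ` copies of a single tour). -/
theorem entropy_min (n μ u : ℕ) (hn : 1 ≤ n) (hμ : 1 ≤ μ) (hu : 1 ≤ u)
    (F : Fin u → ℕ) (hF : ∑ i, F i = 2 * n * μ) (hb : ∀ i, F i ≤ μ) :
    Real.log (2 * n) ≤ ∑ i, Real.negMulLog ((F i : ℝ) / (2 * n * μ)) ∧
    ((∑ i, Real.negMulLog ((F i : ℝ) / (2 * n * μ)) = Real.log (2 * n)) ↔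
      ∀ i, F i = 0 ∨ F i = μ) := by
  have hn1 : (1:ℝ) ≤ (n:ℝ) := by exact_mod_cast hn
  have hμ1 : (1:ℝ) ≤ (μ:ℝ) := by exact_mod_cast hμ
  have h2n : (0:ℝ) < 2 * n := by linarith
  have hμ0 : (0:ℝ) < (μ:ℝ) := by linarith
  have hN : (0:ℝ) < 2 * n * μ := by positivity
  set N : ℝ := 2 * (n:ℝ) * μ with hNdef
  set g : Fin u → ℝ := fun i => negMulLog ((F i : ℝ) / N) - ((F i : ℝ) / N) * log (2 * n)
    with hg
  have hterm : ∀ i, 0 ≤ g i ∧ (g i = 0 ↔ (F i = 0 ∨ F i = μ)) := by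
    intro i
    rcases Nat.eq_zero_or_pos (F i) with h0 | hpos
    · simp [hg, h0, negMulLog_zero]
    · have ha0 : (0:ℝ) < (F i : ℝ) := by exact_mod_cast hpos
      have hp : (0:ℝ) < (F i : ℝ) / N := div_pos ha0 hN
      have hkey : g i = ((F i : ℝ) / N) * (-log ((F i : ℝ) / μ)) := by
        have h1 : (((F i : ℝ) / N) * (2 * n)) = (F i : ℝ) / μ := by
          field_simp [hNdef]; ring
        have h2 : log ((F i : ℝ) / μ) = log ((F i : ℝ) / N) + log (2 * n) := by
          rw [← h1, Real.log_mul (ne_of_gt hp) (ne_of_gt h2n)]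
        simp only [hg, negMulLog]
        rw [h2]; ring
      have hle1 : (F i : ℝ) / μ ≤ 1 := by
        rw [div_le_one hμ0]; exact_mod_cast hb i
      have hlog : log ((F i : ℝ) / μ) ≤ 0 := Real.log_nonpos (by positivity) hle1
      constructor
      · rw [hkey]; nlinarith
      · rw [hkey]
        constructor
        · intro h
          have : -log ((F i : ℝ) / μ) = 0 := by
            rcases mul_eq_zero.mp h with h' | h'
            · exact absurd h' (ne_of_gt hp)
            · exact h'
          have hlz : log ((F i : ℝ) / μ) = 0 := by linarith
          rcases Real.log_eq_zero.mp hlz with h' | h' | h'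
          · exact absurd h' (ne_of_gt (div_pos ha0 hμ0))
          · right
            have : (F i : ℝ) = μ := by
              field_simp at h'; exact_mod_cast h'
            exact_mod_cast this
          · nlinarith [div_pos ha0 hμ0]
        · rintro (h | h)
          · exact absurd h (by omega)
          · have : (F i : ℝ) / μ = 1 := by
              rw [h]; field_simp
            rw [this, Real.log_one]; ring
  have hsum1 : ∑ i, ((F i : ℝ) / N) = 1 := by
    rw [← Finset.sum_div]
    have : (∑ i, (F i : ℝ)) = N := by
      rw [hNdef, ← Nat.cast_sum, hF]; push_cast; ring
    rw [this, div_self (ne_of_gt hN)]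
  have hsumg : ∑ i, g i = (∑ i, negMulLog ((F i : ℝ) / N)) - log (2 * n) := by
    simp only [hg]
    rw [Finset.sum_sub_distrib, ← Finset.sum_mul, hsum1, one_mul]
  have hgnn : 0 ≤ ∑ i, g i := Finset.sum_nonneg fun i _ => (hterm i).1
  constructor
  · linarith
  · constructor
    · intro h
      have hz : ∑ i, g i = 0 := by rw [hsumg, h]; ring
      intro i
      have := (Finset.sum_eq_zero_iff_of_nonneg (fun i _ => (hterm i).1)).mp hz i (by simp)
      exact (hterm i).2.mp this
    · intro h
      have : ∑ i, g i = 0 := Finset.sum_eq_zero fun i _ => (hterm i).2.mpr (h i)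
      linarith [hsumg ▸ this]
end
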